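/- arXiv:2603.19108 — 5 statements merged into one kernel-verified Lean document; each statement's English description precedes it below -/
import Mathlib

section
/- Let ℓ > 0 and let ω > 0 satisfy the transcendental equation (ℓ²ω² − 1)·sin ω = 2ℓω·cos ω. Define f : ℝ → ℝ by f(x) = cos(ωx) + sin(ωx)/(ℓω). Then for every x ∈ [0,1], ∫₀¹ exp(−|x − y|/ℓ) · f(y) dy = (2ℓ/(ℓ²ω² + 1)) · f(x). In other words, f is an eigenfunction of the Fredholm integral operator with the exponential covariance kernel on [0,1], with eigenvalue λ = 2ℓ/(ℓ²ω² + 1). -/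
/-!
Split the integral at `x`: on each side the kernel is a plain exponential `exp (± (y - x) / ℓ)`,
so both pieces have elementary antiderivatives. The left piece integrates to `sin (ω x) / ω`
because `f = (d/dy + 1/ℓ) (sin (ω y) / ω)`; the boundary term of the right piece
at `y = 1` is a multiple of `(ℓ²ω² - 1) sin ω - 2ℓω cos ω`, which vanishes for admissible `ω`.
-/

open Real intervalIntegral

noncomputable def expKernelEigenfunction (ℓ ω y : ℝ) : ℝ :=
  cos (ω * y) + sin (ω * y) / (ℓ * ω)

@[fun_prop]
lemma continuous_expKernelEigenfunction (ℓ ω : ℝ) : Continuous (expKernelEigenfunction ℓ ω) := by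
  unfold expKernelEigenfunction
  fun_prop

lemma integral_exp_neg_abs_sub_mul_eq_add {g : ℝ → ℝ} (hg : Continuous g) (ℓ : ℝ) {a b x : ℝ}
    (hax : a ≤ x) (hxb : x ≤ b) :
    ∫ y in a..b, exp (-|x - y| / ℓ) * g y =
      (∫ y in a..x, exp ((y - x) / ℓ) * g y) + ∫ y in x..b, exp ((x - y) / ℓ) * g y := by
  have hint : ∀ c d,
      IntervalIntegrable (fun y => exp (-|x - y| / ℓ) * g y) MeasureTheory.volume c d :=
    fun c d => (by fun_prop : Continuous _).intervalIntegrable c d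
  rw [← integral_add_adjacent_intervals (hint a x) (hint x b)]
  congr 1
  · refine integral_congr fun y hy => ?_
    rw [Set.uIcc_of_le hax] at hy
    simp only [abs_of_nonneg (sub_nonneg.2 hy.2), neg_sub]
  · refine integral_congr fun y hy => ?_
    rw [Set.uIcc_of_le hxb] at hy
    simp only [abs_sub_comm x y, abs_of_nonneg (sub_nonneg.2 hy.1), neg_sub]

section

variable {ℓ ω : ℝ}

lemma hasDerivAt_exp_mul_sin_div (hω : ω ≠ 0) (x t : ℝ) :
    HasDerivAt (fun y => exp ((y - x) / ℓ) * (sin (ω * y) / ω))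
      (exp ((t - x) / ℓ) * expKernelEigenfunction ℓ ω t) t := by
  have hexp := (((hasDerivAt_id t).sub_const x).div_const ℓ).exp
  have hsin := (((hasDerivAt_id t).const_mul ω).sin).div_const ω
  refine (hexp.mul hsin).congr_deriv ?_
  simp only [expKernelEigenfunction, id, mul_one]
  field_simp
  ring

lemma hasDerivAt_exp_mul_trig (hℓ : ℓ ≠ 0) (hω : ω ≠ 0) (x t : ℝ) :
    HasDerivAt
      (fun y => exp ((x - y) / ℓ) *
        (-(2 * ℓ) * cos (ω * y) + (ℓ ^ 2 * ω ^ 2 - 1) * sin (ω * y) / ω))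
      (exp ((x - t) / ℓ) * expKernelEigenfunction ℓ ω t * (ℓ ^ 2 * ω ^ 2 + 1)) t := by
  have hexp := (((hasDerivAt_id t).const_sub x).div_const ℓ).exp
  have hcos := (((hasDerivAt_id t).const_mul ω).cos).const_mul (-(2 * ℓ))
  have hsin := ((((hasDerivAt_id t).const_mul ω).sin).const_mul (ℓ ^ 2 * ω ^ 2 - 1)).div_const ω
  refine (hexp.mul (hcos.add hsin)).congr_deriv ?_
  simp only [expKernelEigenfunction, id, mul_one, Pi.add_apply]
  field_simp
  ring

lemma integral_exp_sub_mul_expKernelEigenfunction_left (hω : ω ≠ 0) (x : ℝ) :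
    ∫ y in (0 : ℝ)..x, exp ((y - x) / ℓ) * expKernelEigenfunction ℓ ω y = sin (ω * x) / ω := by
  rw [integral_eq_sub_of_hasDerivAt (fun t _ => hasDerivAt_exp_mul_sin_div hω x t)
    ((by fun_prop : Continuous fun y =>
      exp ((y - x) / ℓ) * expKernelEigenfunction ℓ ω y).intervalIntegrable _ _)]
  simp

lemma integral_exp_sub_mul_expKernelEigenfunction_right (hℓ : ℓ ≠ 0) (hω : ω ≠ 0)
    (hadm : (ℓ ^ 2 * ω ^ 2 - 1) * sin ω = 2 * ℓ * ω * cos ω) (x : ℝ) :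
    ∫ y in x..1, exp ((x - y) / ℓ) * expKernelEigenfunction ℓ ω y =
      (2 * ℓ * cos (ω * x) - (ℓ ^ 2 * ω ^ 2 - 1) * sin (ω * x) / ω) / (ℓ ^ 2 * ω ^ 2 + 1) := by
  have hD : ℓ ^ 2 * ω ^ 2 + 1 ≠ 0 := by positivity
  have hboundary : -(2 * ℓ) * cos ω + (ℓ ^ 2 * ω ^ 2 - 1) * sin ω / ω = 0 := by
    field_simp
    linarith
  have hcont : Continuous fun y =>
      exp ((x - y) / ℓ) * expKernelEigenfunction ℓ ω y * (ℓ ^ 2 * ω ^ 2 + 1) := by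
    fun_prop
  rw [eq_div_iff hD, ← integral_mul_const, integral_eq_sub_of_hasDerivAt
    (fun t _ => hasDerivAt_exp_mul_trig hℓ hω x t) (hcont.intervalIntegrable _ _)]
  simp only [mul_one, hboundary, mul_zero, sub_self, zero_div, exp_zero, one_mul]
  ring

end

/-- For a correlation length `ℓ > 0` and an admissible frequency `ω > 0`
(i.e. `(ℓ²ω² − 1)·sin ω = 2ℓω·cos ω`), the function `f(x) = cos(ωx) + sin(ωx)/(ℓω)` is an
eigenfunction of the Fredholm integral operator with exponential covariance kernel
`exp(−|x−y|/ℓ)` on `[0,1]`, with eigenvalue `λ = 2ℓ/(ℓ²ω² + 1)`. -/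
theorem expKernel_fredholm_eigenfunction
    (ℓ ω : ℝ) (hℓ : 0 < ℓ) (hω : 0 < ω)
    (hadm : (ℓ ^ 2 * ω ^ 2 - 1) * Real.sin ω = 2 * ℓ * ω * Real.cos ω)
    (f : ℝ → ℝ)
    (hf : ∀ x, f x = Real.cos (ω * x) + Real.sin (ω * x) / (ℓ * ω)) :
    ∀ x ∈ Set.Icc (0 : ℝ) 1,
      ∫ y in (0 : ℝ)..1, Real.exp (-|x - y| / ℓ) * f y
        = (2 * ℓ / (ℓ ^ 2 * ω ^ 2 + 1)) * f x := by
  rintro x ⟨hx0, hx1⟩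
  obtain rfl : f = expKernelEigenfunction ℓ ω := funext hf
  rw [integral_exp_neg_abs_sub_mul_eq_add (continuous_expKernelEigenfunction ℓ ω) ℓ hx0 hx1,
    integral_exp_sub_mul_expKernelEigenfunction_left hω.ne',
    integral_exp_sub_mul_expKernelEigenfunction_right hℓ.ne' hω.ne' hadm, expKernelEigenfunction]
  field_simp
  ring
end

section
/- Let ℓ > 0 and let ω > 0 satisfy the transcendental equation (ℓ²ω² − 1)·sin ω = 2ℓω·cos ω. Define f : ℝ → ℝ by f(x) = cos(ωx) + sin(ωx)/(ℓω). Then ∫₀¹ f(x)² dx = (ℓ²ω² + 2ℓ + 1)/(2ℓ²ω²). Equivalently, the normalized eigenfunction (√2·ℓω/√(ℓ²ω² + 2ℓ + 1)) · f(x) has unit L² norm on [0,1]. -/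
/-- For a correlation length `ℓ > 0` and an admissible frequency `ω > 0`
(i.e. `(ℓ²ω² − 1)·sin ω = 2ℓω·cos ω`), the unnormalized eigenfunction
`f(x) = cos(ωx) + sin(ωx)/(ℓω)` of the exponential-kernel Fredholm operator satisfies
`∫₀¹ f(x)² dx = (ℓ²ω² + 2ℓ + 1)/(2ℓ²ω²)`; equivalently, the eigenfunction scaled by
`√2·ℓω/√(ℓ²ω² + 2ℓ + 1)` has unit L² norm on `[0,1]`. -/
theorem expKernel_eigenfunction_normSq
    (ℓ ω : ℝ) (hℓ : 0 < ℓ) (hω : 0 < ω)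
    (hadm : (ℓ ^ 2 * ω ^ 2 - 1) * Real.sin ω = 2 * ℓ * ω * Real.cos ω)
    (f : ℝ → ℝ)
    (hf : ∀ x, f x = Real.cos (ω * x) + Real.sin (ω * x) / (ℓ * ω)) :
    ∫ x in (0 : ℝ)..1, (f x) ^ 2
      = (ℓ ^ 2 * ω ^ 2 + 2 * ℓ + 1) / (2 * ℓ ^ 2 * ω ^ 2) := by
  have hℓ0 : ℓ ≠ 0 := ne_of_gt hℓ
  have hω0 : ω ≠ 0 := ne_of_gt hω
  set F : ℝ → ℝ := fun x => x / 2 + Real.sin (2 * (ω * x)) / (4 * ω)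
      - Real.cos (2 * (ω * x)) / (2 * ℓ * ω ^ 2)
      + (x / 2 - Real.sin (2 * (ω * x)) / (4 * ω)) / (ℓ ^ 2 * ω ^ 2) with hFdef
  have hF : ∀ x ∈ Set.uIcc (0:ℝ) 1, HasDerivAt F ((f x) ^ 2) x := by
    intro x _
    have hlin : HasDerivAt (fun x : ℝ => 2 * (ω * x)) (2 * ω) x := by
      simpa [mul_assoc] using (hasDerivAt_id x).const_mul (2 * ω)
    have hsin := hlin.sin
    have hcos := hlin.cos
    have hx : HasDerivAt (fun x : ℝ => x / 2) (1 / 2 : ℝ) x := by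
      simpa using (hasDerivAt_id x).div_const 2
    have hD : HasDerivAt F
        (1 / 2 + Real.cos (2 * (ω * x)) * (2 * ω) / (4 * ω)
          - (-Real.sin (2 * (ω * x)) * (2 * ω)) / (2 * ℓ * ω ^ 2)
          + (1 / 2 - Real.cos (2 * (ω * x)) * (2 * ω) / (4 * ω)) / (ℓ ^ 2 * ω ^ 2)) x := by
      exact ((hx.add (hsin.div_const (4 * ω))).sub (hcos.div_const (2 * ℓ * ω ^ 2))).add
        ((hx.sub (hsin.div_const (4 * ω))).div_const (ℓ ^ 2 * ω ^ 2))
    convert hD using 1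
    rw [hf x, Real.sin_two_mul, Real.cos_two_mul]
    have hpyth : Real.sin (ω * x) ^ 2 + Real.cos (ω * x) ^ 2 = 1 := Real.sin_sq_add_cos_sq _
    field_simp
    ring_nf
    linear_combination 8 * hpyth
  have hcont : ContinuousOn (fun x => (f x) ^ 2) (Set.uIcc (0:ℝ) 1) := by
    have : Continuous fun x => (f x) ^ 2 := by
      have : Continuous f := by
        have : f = fun x => Real.cos (ω * x) + Real.sin (ω * x) / (ℓ * ω) := funext hf
        rw [this]; fun_prop
      fun_prop
    exact this.continuousOn
  rw [intervalIntegral.integral_eq_sub_of_hasDerivAt hF (hcont.intervalIntegrable)]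
  have hs := Real.sin_sq_add_cos_sq ω
  simp only [hFdef]
  norm_num [Real.sin_two_mul, Real.cos_two_mul]
  field_simp
  ring_nf
  linear_combination (4*Real.cos ω) * hadm
end

section
/- Let ℓ > 0 and let ω₁ > 0 and ω₂ > 0 be two distinct frequencies each satisfying the transcendental equation (ℓ²ω² − 1)·sin ω = 2ℓω·cos ω. Define f_{ω_i}(x) = cos(ω_i x) + sin(ω_i x)/(ℓ ω_i) for i = 1, 2. Then ∫₀¹ f_{ω₁}(x) · f_{ω₂}(x) dx = 0; that is, eigenfunctions of the exponential-kernel Fredholm operator corresponding to distinct admissible frequencies are orthogonal in L²([0,1]). -/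
/-- For a correlation length `ℓ > 0`, eigenfunctions
`f_ω(x) = cos(ωx) + sin(ωx)/(ℓω)` of the exponential-kernel Fredholm operator
corresponding to distinct admissible frequencies `ω₁ ≠ ω₂` (both satisfying
`(ℓ²ω² − 1)·sin ω = 2ℓω·cos ω`) are orthogonal in `L²([0,1])`. -/
theorem expKernel_eigenfunctions_orthogonal
    (ℓ ω₁ ω₂ : ℝ) (hℓ : 0 < ℓ) (hω₁ : 0 < ω₁) (hω₂ : 0 < ω₂) (hne : ω₁ ≠ ω₂)
    (hadm₁ : (ℓ ^ 2 * ω₁ ^ 2 - 1) * Real.sin ω₁ = 2 * ℓ * ω₁ * Real.cos ω₁)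
    (hadm₂ : (ℓ ^ 2 * ω₂ ^ 2 - 1) * Real.sin ω₂ = 2 * ℓ * ω₂ * Real.cos ω₂)
    (f₁ f₂ : ℝ → ℝ)
    (hf₁ : ∀ x, f₁ x = Real.cos (ω₁ * x) + Real.sin (ω₁ * x) / (ℓ * ω₁))
    (hf₂ : ∀ x, f₂ x = Real.cos (ω₂ * x) + Real.sin (ω₂ * x) / (ℓ * ω₂)) :
    ∫ x in (0 : ℝ)..1, f₁ x * f₂ x = 0 := by
  have hℓ0 : ℓ ≠ 0 := hℓ.ne'
  have hω₁0 : ω₁ ≠ 0 := hω₁.ne'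
  have hω₂0 : ω₂ ≠ 0 := hω₂.ne'
  have hden : ω₂ ^ 2 - ω₁ ^ 2 ≠ 0 := by
    intro h
    have : ω₂ = ω₁ := by nlinarith
    exact hne this.symm
  -- the eigenfunctions and their derivatives
  set g : ℝ → ℝ → ℝ := fun ω x => Real.cos (ω * x) + Real.sin (ω * x) / (ℓ * ω) with hg
  set d : ℝ → ℝ → ℝ := fun ω x => -(ω * Real.sin (ω * x)) + Real.cos (ω * x) / ℓ with hd
  have hderiv : ∀ (ω : ℝ), ω ≠ 0 → ∀ x : ℝ, HasDerivAt (g ω) (d ω x) x := by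
    intro ω hω x
    have hid : HasDerivAt (fun y : ℝ => ω * y) ω x := by
      simpa using (hasDerivAt_id x).const_mul ω
    have hcos := hid.cos
    have hsin := hid.sin
    have := hcos.add (hsin.div_const (ℓ * ω))
    convert this using 1
    case e'_4 => rfl
    case e'_5 => rfl
    case e'_8 => rfl
    rw [mul_comm ℓ ω, ← div_div, mul_div_assoc, div_self hω, mul_one]
    ring
  have hderiv' : ∀ (ω : ℝ), ω ≠ 0 → ∀ x : ℝ,
      HasDerivAt (d ω) (-(ω ^ 2 * g ω x)) x := by
    intro ω hω x
    have hid : HasDerivAt (fun y : ℝ => ω * y) ω x := by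
      simpa using (hasDerivAt_id x).const_mul ω
    have hcos := hid.cos
    have hsin := hid.sin
    have := ((hsin.const_mul ω).neg).add (hcos.div_const ℓ)
    convert this using 1
    case e'_4 => rfl
    case e'_5 => rfl
    case e'_8 => rfl
    simp only [hg]
    field_simp
    ring
  -- antiderivative
  set G : ℝ → ℝ := fun x => (d ω₁ x * g ω₂ x - g ω₁ x * d ω₂ x) / (ω₂ ^ 2 - ω₁ ^ 2)
    with hG
  have hGderiv : ∀ x : ℝ, HasDerivAt G (f₁ x * f₂ x) x := by
    intro x
    have h1 := ((hderiv' ω₁ hω₁0 x).mul (hderiv ω₂ hω₂0 x)).sub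
      ((hderiv ω₁ hω₁0 x).mul (hderiv' ω₂ hω₂0 x))
    have h2 := h1.div_const (ω₂ ^ 2 - ω₁ ^ 2)
    convert h2 using 1
    case e'_4 => rfl
    case e'_5 => rfl
    case e'_8 => rfl
    rw [hf₁ x, hf₂ x]
    simp only [hg, hd]
    rw [eq_div_iff hden]
    field_simp
    ring
  have hcont : IntervalIntegrable (fun x => f₁ x * f₂ x) MeasureTheory.volume 0 1 := by
    apply Continuous.intervalIntegrable
    have : Continuous f₁ := by
      have : f₁ = g ω₁ := funext hf₁
      rw [this]; fun_prop
    have : Continuous f₂ := by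
      have : f₂ = g ω₂ := funext hf₂
      rw [this]; fun_prop
    fun_prop
  have hint := intervalIntegral.integral_eq_sub_of_hasDerivAt
    (fun x _ => hGderiv x) hcont
  rw [hint]
  -- boundary term at 0 vanishes
  have hG0 : G 0 = 0 := by
    simp only [hG, hg, hd]
    norm_num
  -- boundary term at 1 vanishes using admissibility
  have hb : ∀ ω : ℝ, 0 < ω →
      (ℓ ^ 2 * ω ^ 2 - 1) * Real.sin ω = 2 * ℓ * ω * Real.cos ω →
      d ω 1 = -(g ω 1) / ℓ := by
    intro ω hω hadm
    simp only [hd, hg, mul_one]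
    field_simp
    nlinarith [hadm]
  have hG1 : G 1 = 0 := by
    show (d ω₁ 1 * g ω₂ 1 - g ω₁ 1 * d ω₂ 1) / (ω₂ ^ 2 - ω₁ ^ 2) = 0
    rw [hb ω₁ hω₁ hadm₁, hb ω₂ hω₂ hadm₂, div_eq_zero_iff]
    left; ring
  rw [hG0, hG1, sub_zero]
end

section
/- Let σ > 0 and ℓ > 0, and set a = 1/(4σ²), b = 1/(2ℓ²), c = √(a² + 2ab), A = a + b + c, B = b/A. Let H_n denote the physicists' Hermite polynomials, defined by H₀(x) = 1, H₁(x) = 2x, and H_{n+1}(x) = 2x·H_n(x) − 2n·H_{n−1}(x), and define φ_n(x) = exp(−(c − a)x²)·H_n(√(2c)·x). Then for every natural number n ≥ 0 and every x ∈ ℝ, ∫_ℝ exp(−(x − y)²/(2ℓ²)) · φ_n(y) · (σ√(2π))⁻¹ exp(−y²/(2σ²)) dy = √(2a/A) · Bⁿ · φ_n(x). That is, φ_n is an eigenfunction of the Fredholm integral operator with the squared-exponential kernel under the Gaussian measure N(0, σ²), with eigenvalue λ_{n+1} = √(2a/A)·Bⁿ. -/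
/-- Physicists' Hermite polynomials, as real functions:
`H₀(x) = 1`, `H₁(x) = 2x`, `H_{n+1}(x) = 2x·H_n(x) − 2n·H_{n−1}(x)`. -/
noncomputable def physHermite : ℕ → ℝ → ℝ
  | 0, _ => 1
  | 1, x => 2 * x
  | n + 2, x => 2 * x * physHermite (n + 1) x - 2 * (n + 1) * physHermite n x

open Real MeasureTheory

lemma physHermite_continuous : ∀ n, Continuous (physHermite n) := by
  intro n
  induction n using Nat.twoStepInduction with
  | zero => exact continuous_const
  | one => exact continuous_const.mul continuous_id
  | more n ih1 ih2 =>
    show Continuous fun x => 2 * x * physHermite (n + 1) x - 2 * (↑(n) + 1) * physHermite n x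
    exact ((continuous_const.mul continuous_id).mul ih2).sub (continuous_const.mul ih1)

lemma two_mul_hasDerivAt (x : ℝ) : HasDerivAt (fun y : ℝ => 2 * y) 2 x := by
  simpa using (hasDerivAt_id x).const_mul 2

lemma physHermite_hasDerivAt : ∀ (n : ℕ) (x : ℝ),
    HasDerivAt (physHermite (n + 1)) (2 * (n + 1) * physHermite n x) x := by
  intro n
  induction n using Nat.twoStepInduction with
  | zero =>
    intro x
    have h := two_mul_hasDerivAt x
    have hf : physHermite 1 = fun y : ℝ => 2 * y := by funext y; rfl
    rw [hf, show (2 : ℝ) * (↑(0:ℕ) + 1) * physHermite 0 x = 2 by simp [physHermite]]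
    exact h
  | one =>
    intro x
    have hf : physHermite 2 = fun y : ℝ => 2 * y * (2 * y) - 2 * 1 * 1 := by
      funext y
      show 2 * y * physHermite 1 y - 2 * (↑(0:ℕ) + 1) * physHermite 0 y = _
      simp [physHermite]
    rw [hf]
    have h := ((two_mul_hasDerivAt x).mul (two_mul_hasDerivAt x)).sub_const (2 * 1 * 1)
    rw [show (2:ℝ) * (↑(1:ℕ) + 1) * physHermite 1 x = 2 * (2 * x) + 2 * x * 2 by
      simp [physHermite]; ring]
    exact h
  | more n ih1 ih2 =>
    intro x
    have h1 := ih1 x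
    have h2 := ih2 x
    have hrec : physHermite (n + 1 + 1 + 1) = fun y =>
        2 * y * physHermite (n + 1 + 1) y - 2 * ((n : ℝ) + 1 + 1) * physHermite (n + 1) y := by
      funext y
      show 2 * y * physHermite (n + 2) y - 2 * (↑(n + 1) + 1) * physHermite (n + 1) y = _
      push_cast; ring_nf
    rw [hrec]
    have hd := ((two_mul_hasDerivAt x).mul h2).sub (h1.const_mul (2 * ((n : ℝ) + 1 + 1)))
    have heq : (2:ℝ) * (↑(n + 1 + 1) + 1) * physHermite (n + 1 + 1) x
        = 2 * physHermite (n + 1 + 1) x + 2 * x * (2 * (↑(n + 1) + 1) * physHermite (n + 1) x)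
          - 2 * ((n:ℝ) + 1 + 1) * (2 * (↑n + 1) * physHermite n x) := by
      have hx : physHermite (n + 1 + 1) x
          = 2 * x * physHermite (n + 1) x - 2 * ((n:ℝ) + 1) * physHermite n x := by
        show physHermite (n + 2) x = _
        show 2 * x * physHermite (n + 1) x - 2 * (↑n + 1) * physHermite n x = _
        ring
      rw [hx]; push_cast; ring
    rw [heq]
    exact hd


lemma physHermite_bound : ∀ n, ∃ C : ℝ, 0 ≤ C ∧ ∀ x, |physHermite n x| ≤ C * (1 + |x|) ^ n := by
  intro n
  induction n using Nat.twoStepInduction with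
  | zero => exact ⟨1, zero_le_one, fun x => by simp [physHermite]⟩
  | one =>
    refine ⟨2, by norm_num, fun x => ?_⟩
    show |2 * x| ≤ 2 * (1 + |x|) ^ 1
    rw [abs_mul]
    simp only [pow_one]
    nlinarith [abs_nonneg x, abs_of_nonneg (zero_le_two (α := ℝ))]
  | more n ih1 ih2 =>
    obtain ⟨C₀, hC₀, h0⟩ := ih1
    obtain ⟨C₁, hC₁, h1⟩ := ih2
    refine ⟨2 * C₁ + 2 * (n + 1) * C₀, by positivity, fun x => ?_⟩
    have hx1 : (1:ℝ) ≤ 1 + |x| := by simp [abs_nonneg]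
    have hp0 : (1 + |x|) ^ n ≤ (1 + |x|) ^ (n + 2) := pow_le_pow_right₀ hx1 (by omega)
    have hp1 : (1 + |x|) ^ (n + 1) ≤ (1 + |x|) ^ (n + 2) := pow_le_pow_right₀ hx1 (by omega)
    have hxle : |x| ≤ 1 + |x| := by linarith
    calc |physHermite (n + 2) x|
        = |2 * x * physHermite (n + 1) x - 2 * (↑n + 1) * physHermite n x| := rfl
      _ ≤ |2 * x * physHermite (n + 1) x| + |2 * (↑n + 1) * physHermite n x| := abs_sub _ _
      _ = 2 * |x| * |physHermite (n + 1) x| + 2 * (↑n + 1) * |physHermite n x| := by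
          rw [abs_mul, abs_mul, abs_mul, abs_mul, abs_two,
            abs_of_nonneg (by positivity : (0:ℝ) ≤ (n:ℝ) + 1)]
      _ ≤ 2 * (1 + |x|) * (C₁ * (1 + |x|) ^ (n + 1)) + 2 * (↑n + 1) * (C₀ * (1 + |x|) ^ n) := by
          gcongr <;> [exact h1 x; exact h0 x]
      _ ≤ (2 * C₁ + 2 * (↑n + 1) * C₀) * (1 + |x|) ^ (n + 2) := by
          have e1 : 2 * (1 + |x|) * (C₁ * (1 + |x|) ^ (n + 1)) = 2 * C₁ * (1 + |x|) ^ (n + 2) := by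
            ring
          rw [e1]
          have : 2 * (↑n + 1) * (C₀ * (1 + |x|) ^ n) ≤ 2 * (↑n + 1) * C₀ * (1 + |x|) ^ (n + 2) := by
            calc 2 * (↑n + 1) * (C₀ * (1 + |x|) ^ n) = 2 * (↑n + 1) * C₀ * (1 + |x|) ^ n := by ring
              _ ≤ 2 * (↑n + 1) * C₀ * (1 + |x|) ^ (n + 2) := by
                  gcongr
          linarith

lemma integrable_pow_mul_gauss {k : ℝ} (hk : 0 < k) (n : ℕ) :
    Integrable (fun y : ℝ => y ^ n * Real.exp (-k * y ^ 2)) := by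
  have := integrable_rpow_mul_exp_neg_mul_sq hk (s := (n : ℝ)) (by exact lt_of_lt_of_le (by norm_num) (Nat.cast_nonneg n))
  simpa [Real.rpow_natCast] using this

lemma integrable_abs_pow_mul_gauss {k : ℝ} (hk : 0 < k) (n : ℕ) :
    Integrable (fun y : ℝ => |y| ^ n * Real.exp (-k * y ^ 2)) := by
  have h := (integrable_pow_mul_gauss hk n).abs
  have : (fun y : ℝ => |y ^ n * Real.exp (-k * y ^ 2)|)
      = fun y : ℝ => |y| ^ n * Real.exp (-k * y ^ 2) := by
    funext y
    rw [abs_mul, abs_pow, abs_of_pos (Real.exp_pos _)]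
  rwa [this] at h

lemma integrable_one_add_abs_pow_mul_gauss {k : ℝ} (hk : 0 < k) (n : ℕ) :
    Integrable (fun y : ℝ => (1 + |y|) ^ n * Real.exp (-k * y ^ 2)) := by
  have hsum : ∀ y : ℝ, (1 + |y|) ^ n * Real.exp (-k * y ^ 2)
      = ∑ i ∈ Finset.range (n + 1),
          (n.choose i : ℝ) * (|y| ^ i * Real.exp (-k * y ^ 2)) := by
    intro y
    rw [add_comm (1:ℝ) |y|, add_pow]
    rw [Finset.sum_mul]
    congr 1
    funext i
    ring
  have : Integrable (fun y : ℝ => ∑ i ∈ Finset.range (n + 1),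
      (n.choose i : ℝ) * (|y| ^ i * Real.exp (-k * y ^ 2))) := by
    apply integrable_finset_sum
    intro i _
    exact (integrable_abs_pow_mul_gauss hk i).const_mul _
  exact this.congr (by filter_upwards with y using (hsum y).symm)

lemma integral_gauss_shift {k : ℝ} (m : ℝ) :
    ∫ y : ℝ, Real.exp (-k * (y - m) ^ 2) = Real.sqrt (π / k) := by
  rw [show (fun y : ℝ => Real.exp (-k * (y - m) ^ 2))
      = fun y : ℝ => (fun t : ℝ => Real.exp (-k * t ^ 2)) (y - m) from rfl]
  rw [integral_sub_right_eq_self (fun t : ℝ => Real.exp (-k * t ^ 2)) m]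
  exact integral_gaussian k

noncomputable def psiF (c a γ : ℝ) (n : ℕ) (x : ℝ) : ℝ :=
  Real.exp (-(c - a) * x ^ 2) * physHermite n (γ * x)

noncomputable def FF (a b c γ : ℝ) (n : ℕ) (x y : ℝ) : ℝ :=
  Real.exp (-b * (x - y) ^ 2) * psiF c a γ n y * Real.exp (-(2 * a) * y ^ 2)

lemma psiF_cont (c a γ : ℝ) (n : ℕ) : Continuous (psiF c a γ n) := by
  unfold psiF
  exact ((continuous_const.mul (continuous_pow 2)).rexp).mul
    ((physHermite_continuous n).comp (continuous_const.mul continuous_id))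

lemma FF_cont (a b c γ : ℝ) (n : ℕ) (x : ℝ) : Continuous (fun y => FF a b c γ n x y) := by
  unfold FF
  refine (Continuous.mul ?_ (psiF_cont c a γ n)).mul ?_
  · exact (continuous_const.mul ((continuous_const.sub continuous_id).pow 2)).rexp
  · exact (continuous_const.mul (continuous_pow 2)).rexp

lemma psiF_bound (c a γ : ℝ) (hca : 0 ≤ c - a) (hγ : 0 ≤ γ) (n : ℕ) :
    ∃ K : ℝ, 0 ≤ K ∧ ∀ y : ℝ, |psiF c a γ n y| ≤ K * (1 + |y|) ^ n := by
  obtain ⟨C, hC, hCb⟩ := physHermite_bound n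
  refine ⟨C * (1 + γ) ^ n, by positivity, fun y => ?_⟩
  unfold psiF
  rw [abs_mul]
  have h1 : |Real.exp (-(c - a) * y ^ 2)| ≤ 1 := by
    rw [abs_of_pos (Real.exp_pos _)]
    apply Real.exp_le_one_iff.mpr
    nlinarith [sq_nonneg y]
  have h2 : |physHermite n (γ * y)| ≤ C * (1 + γ) ^ n * (1 + |y|) ^ n := by
    calc |physHermite n (γ * y)| ≤ C * (1 + |γ * y|) ^ n := hCb _
      _ ≤ C * ((1 + γ) * (1 + |y|)) ^ n := by
          gcongr
          rw [abs_mul, abs_of_nonneg hγ]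
          nlinarith [abs_nonneg y]
      _ = C * (1 + γ) ^ n * (1 + |y|) ^ n := by rw [mul_pow]; ring
  calc |Real.exp (-(c - a) * y ^ 2)| * |physHermite n (γ * y)|
      ≤ 1 * (C * (1 + γ) ^ n * (1 + |y|) ^ n) := by
        apply mul_le_mul h1 h2 (abs_nonneg _)
        norm_num
    _ = C * (1 + γ) ^ n * (1 + |y|) ^ n := by ring

lemma FF_bound (a b c γ : ℝ) (hb : 0 ≤ b) (K : ℝ) (n : ℕ)
    (hK : ∀ y : ℝ, |psiF c a γ n y| ≤ K * (1 + |y|) ^ n) (x y : ℝ) :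
    |FF a b c γ n x y| ≤ K * ((1 + |y|) ^ n * Real.exp (-(2 * a) * y ^ 2)) := by
  unfold FF
  rw [abs_mul, abs_mul, abs_of_pos (Real.exp_pos _), abs_of_pos (Real.exp_pos _)]
  have h1 : Real.exp (-b * (x - y) ^ 2) ≤ 1 := by
    apply Real.exp_le_one_iff.mpr
    nlinarith [sq_nonneg (x - y)]
  have hKy : 0 ≤ K * (1 + |y|) ^ n := le_trans (abs_nonneg _) (hK y)
  calc Real.exp (-b * (x - y) ^ 2) * |psiF c a γ n y| * Real.exp (-(2 * a) * y ^ 2)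
      ≤ 1 * (K * (1 + |y|) ^ n) * Real.exp (-(2 * a) * y ^ 2) := by
        apply mul_le_mul_of_nonneg_right _ (Real.exp_pos _).le
        exact mul_le_mul h1 (hK y) (abs_nonneg _) zero_le_one
    _ = K * ((1 + |y|) ^ n * Real.exp (-(2 * a) * y ^ 2)) := by ring

lemma FF_integrable (a b c γ : ℝ) (ha : 0 < a) (hb : 0 ≤ b) (hca : 0 ≤ c - a) (hγ : 0 ≤ γ)
    (n : ℕ) (x : ℝ) : Integrable (fun y => FF a b c γ n x y) := by
  obtain ⟨K, hK0, hK⟩ := psiF_bound c a γ hca hγ n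
  apply Integrable.mono'
    (((integrable_one_add_abs_pow_mul_gauss (by positivity : (0:ℝ) < 2 * a) n).const_mul K))
  · exact (FF_cont a b c γ n x).aestronglyMeasurable
  · filter_upwards with y
    rw [Real.norm_eq_abs]
    exact FF_bound a b c γ hb K n hK x y

lemma FF_mul_integrable (a b c γ : ℝ) (ha : 0 < a) (hb : 0 ≤ b) (hca : 0 ≤ c - a) (hγ : 0 ≤ γ)
    (n : ℕ) (x : ℝ) (L : ℝ → ℝ) (hL : Continuous L) (M : ℝ) (hM : 0 ≤ M)
    (hLb : ∀ y, |L y| ≤ M * (1 + |y|)) :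
    Integrable (fun y => L y * FF a b c γ n x y) := by
  obtain ⟨K, hK0, hK⟩ := psiF_bound c a γ hca hγ n
  apply Integrable.mono'
    (((integrable_one_add_abs_pow_mul_gauss (by positivity : (0:ℝ) < 2 * a) (n + 1)).const_mul
      (M * K)))
  · exact (hL.mul (FF_cont a b c γ n x)).aestronglyMeasurable
  · filter_upwards with y
    rw [Real.norm_eq_abs, abs_mul]
    calc |L y| * |FF a b c γ n x y|
        ≤ (M * (1 + |y|)) * (K * ((1 + |y|) ^ n * Real.exp (-(2 * a) * y ^ 2))) := by
          apply mul_le_mul (hLb y) (FF_bound a b c γ hb K n hK x y) (abs_nonneg _)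
          positivity
      _ = M * K * ((1 + |y|) ^ (n + 1) * Real.exp (-(2 * a) * y ^ 2)) := by ring

lemma psiF_hasDerivAt_zero (c a γ : ℝ) (x : ℝ) :
    HasDerivAt (psiF c a γ 0)
      (-2 * (c - a) * x * psiF c a γ 0 x) x := by
  have h : psiF c a γ 0 = fun x => Real.exp (-(c - a) * x ^ 2) := by
    funext y; unfold psiF; simp [physHermite]
  rw [h]
  have hd : HasDerivAt (fun x : ℝ => Real.exp (-(c - a) * x ^ 2))
      (Real.exp (-(c - a) * x ^ 2) * (-(c - a) * (2 * x ^ 1))) x :=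
    ((hasDerivAt_pow 2 x).const_mul (-(c - a))).exp
  convert hd using 1
  simp only []
  ring

lemma psiF_hasDerivAt_succ (c a γ : ℝ) (n : ℕ) (x : ℝ) :
    HasDerivAt (psiF c a γ (n + 1))
      (-2 * (c - a) * x * psiF c a γ (n + 1) x + 2 * (n + 1) * γ * psiF c a γ n x) x := by
  have he : HasDerivAt (fun x : ℝ => Real.exp (-(c - a) * x ^ 2))
      (Real.exp (-(c - a) * x ^ 2) * (-(c - a) * (2 * x ^ 1))) x :=
    ((hasDerivAt_pow 2 x).const_mul (-(c - a))).exp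
  have hl : HasDerivAt (fun x : ℝ => γ * x) γ x := by
    simpa using (hasDerivAt_id x).const_mul γ
  have hh : HasDerivAt (fun x : ℝ => physHermite (n + 1) (γ * x))
      (2 * (n + 1) * physHermite n (γ * x) * γ) x :=
    (physHermite_hasDerivAt n (γ * x)).comp x hl
  have := he.mul hh
  unfold psiF
  refine this.congr_deriv ?_
  ring

lemma FF_hasDerivAt_param (a b c γ : ℝ) (n : ℕ) (y x : ℝ) :
    HasDerivAt (fun x => FF a b c γ n x y) (-2 * b * (x - y) * FF a b c γ n x y) x := by
  have h1 : HasDerivAt (fun x : ℝ => x - y) 1 x := (hasDerivAt_id x).sub_const y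
  have h2 : HasDerivAt (fun x : ℝ => -b * (x - y) ^ 2) (-b * (2 * (x - y) ^ 1 * 1)) x :=
    ((h1.pow 2).const_mul (-b))
  have h3 : HasDerivAt (fun x : ℝ => Real.exp (-b * (x - y) ^ 2))
      (Real.exp (-b * (x - y) ^ 2) * (-b * (2 * (x - y) ^ 1 * 1))) x := h2.exp
  have h4 := (h3.mul_const (psiF c a γ n y)).mul_const (Real.exp (-(2 * a) * y ^ 2))
  unfold FF
  refine h4.congr_deriv ?_
  ring

lemma T_hasDerivAt (a b c γ : ℝ) (ha : 0 < a) (hb : 0 < b) (hca : 0 ≤ c - a) (hγ : 0 ≤ γ)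
    (n : ℕ) (x₀ : ℝ) :
    HasDerivAt (fun x => ∫ y : ℝ, FF a b c γ n x y)
      (∫ y : ℝ, -2 * b * (x₀ - y) * FF a b c γ n x₀ y) x₀ := by
  obtain ⟨K, hK0, hK⟩ := psiF_bound c a γ hca hγ n
  have key := hasDerivAt_integral_of_dominated_loc_of_deriv_le
    (F := fun x y => FF a b c γ n x y)
    (F' := fun x y => -2 * b * (x - y) * FF a b c γ n x y)
    (bound := fun y => (2 * b * (|x₀| + 1) * K) * ((1 + |y|) ^ (n + 1)
      * Real.exp (-(2 * a) * y ^ 2)))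
    (μ := volume) (x₀ := x₀) (s := Metric.ball x₀ 1) (Metric.ball_mem_nhds x₀ one_pos)
    (Filter.Eventually.of_forall fun x => (FF_cont a b c γ n x).aestronglyMeasurable)
    (FF_integrable a b c γ ha hb.le hca hγ n x₀)
    ((((continuous_const.mul (continuous_const.sub continuous_id)).mul
      (FF_cont a b c γ n x₀))).aestronglyMeasurable)
    ?_ ?_ ?_
  · exact key.2
  · filter_upwards with y
    intro x hx
    rw [Real.norm_eq_abs, abs_mul]
    have hxx : |x| ≤ |x₀| + 1 := by
      have := mem_ball_iff_norm.mp hx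
      rw [Real.norm_eq_abs] at this
      calc |x| = |x₀ + (x - x₀)| := by ring_nf
        _ ≤ |x₀| + |x - x₀| := abs_add_le _ _
        _ ≤ |x₀| + 1 := by linarith [this.le]
    have h1 : |(-2 : ℝ) * b * (x - y)| ≤ 2 * b * (|x₀| + 1) * (1 + |y|) := by
      rw [abs_mul, abs_mul]
      have : |x - y| ≤ (|x₀| + 1) * (1 + |y|) := by
        calc |x - y| ≤ |x| + |y| := abs_sub _ _
          _ ≤ (|x₀| + 1) + |y| := by linarith
          _ ≤ (|x₀| + 1) * (1 + |y|) := by nlinarith [abs_nonneg x₀, abs_nonneg y]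
      calc |(-2:ℝ)| * |b| * |x - y| = 2 * b * |x - y| := by
            rw [abs_of_pos hb]; norm_num
        _ ≤ 2 * b * ((|x₀| + 1) * (1 + |y|)) := by
            apply mul_le_mul_of_nonneg_left this (by positivity)
        _ = 2 * b * (|x₀| + 1) * (1 + |y|) := by ring
    calc |(-2:ℝ) * b * (x - y)| * |FF a b c γ n x y|
        ≤ (2 * b * (|x₀| + 1) * (1 + |y|)) * (K * ((1 + |y|) ^ n
            * Real.exp (-(2 * a) * y ^ 2))) := by
          apply mul_le_mul h1 (FF_bound a b c γ hb.le K n hK x y) (abs_nonneg _)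
          positivity
      _ = (2 * b * (|x₀| + 1) * K) * ((1 + |y|) ^ (n + 1) * Real.exp (-(2 * a) * y ^ 2)) := by
          ring
  · exact (integrable_one_add_abs_pow_mul_gauss (by positivity : (0:ℝ) < 2 * a)
      (n + 1)).const_mul _
  · filter_upwards with y
    intro x _
    exact FF_hasDerivAt_param a b c γ n y x

lemma exp_ident (a b c : ℝ) (hA : a + b + c ≠ 0) (hc2 : c ^ 2 = a ^ 2 + 2 * a * b) (x y : ℝ) :
    Real.exp (-b * (x - y) ^ 2) * Real.exp (-(c - a) * y ^ 2) * Real.exp (-(2 * a) * y ^ 2)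
      = Real.exp (-(c - a) * x ^ 2)
        * Real.exp (-(a + b + c) * (y - b * x / (a + b + c)) ^ 2) := by
  rw [← Real.exp_add, ← Real.exp_add, ← Real.exp_add]
  congr 1
  have h := hc2
  field_simp
  linear_combination x ^ 2 * h

theorem main_integral (a b c γ : ℝ) (ha : 0 < a) (hb : 0 < b)
    (hc2 : c ^ 2 = a ^ 2 + 2 * a * b) (hc0 : 0 < c) (hγ : γ ^ 2 = 2 * c) (hγ0 : 0 ≤ γ) :
    ∀ (n : ℕ) (x : ℝ), ∫ y : ℝ, FF a b c γ n x y
      = Real.sqrt (π / (a + b + c)) * (b / (a + b + c)) ^ n * psiF c a γ n x := by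
  have hca : a < c := by nlinarith
  have hca' : (0:ℝ) ≤ c - a := by linarith
  have hA0 : 0 < a + b + c := by linarith
  have hAne : a + b + c ≠ 0 := ne_of_gt hA0
  have key : (a + b + c) * (a + b - c) = b ^ 2 := by linear_combination -hc2
  set S := Real.sqrt (π / (a + b + c)) with hS
  set B := b / (a + b + c) with hBdef
  -- the moment identity
  have moment : ∀ (m : ℕ) (dψm : ℝ → ℝ),
      (∀ x, ∫ y : ℝ, FF a b c γ m x y = S * B ^ m * psiF c a γ m x) →
      (∀ x, HasDerivAt (psiF c a γ m) (dψm x) x) →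
      ∀ x, ∫ y : ℝ, y * FF a b c γ m x y
        = x * (S * B ^ m * psiF c a γ m x) + 1 / (2 * b) * (S * B ^ m * dψm x) := by
    intro m dψm hIH hd x
    have hT := T_hasDerivAt a b c γ ha hb hca' hγ0 m x
    rw [show (fun x => ∫ y : ℝ, FF a b c γ m x y)
        = fun x => S * B ^ m * psiF c a γ m x from funext hIH] at hT
    have hT2 : HasDerivAt (fun x => S * B ^ m * psiF c a γ m x) (S * B ^ m * dψm x) x :=
      (hd x).const_mul _
    have huniq : ∫ y : ℝ, -2 * b * (x - y) * FF a b c γ m x y = S * B ^ m * dψm x :=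
      hT.unique hT2
    have hLint : Integrable (fun y : ℝ => -2 * b * (x - y) * FF a b c γ m x y) := by
      apply FF_mul_integrable a b c γ ha hb.le hca' hγ0 m x
        (fun y => -2 * b * (x - y))
        (continuous_const.mul (continuous_const.sub continuous_id))
        (2 * b * (|x| + 1)) (by positivity)
      intro y
      rw [abs_mul, abs_mul]
      have h1 : |x - y| ≤ (|x| + 1) * (1 + |y|) := by
        calc |x - y| ≤ |x| + |y| := abs_sub _ _
          _ ≤ (|x| + 1) * (1 + |y|) := by nlinarith [abs_nonneg x, abs_nonneg y]
      calc |(-2:ℝ)| * |b| * |x - y| = 2 * b * |x - y| := by rw [abs_of_pos hb]; norm_num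
        _ ≤ 2 * b * ((|x| + 1) * (1 + |y|)) := by
            apply mul_le_mul_of_nonneg_left h1 (by positivity)
        _ = 2 * b * (|x| + 1) * (1 + |y|) := by ring
    have hsplit : ∀ y : ℝ, y * FF a b c γ m x y
        = x * FF a b c γ m x y + 1 / (2 * b) * (-2 * b * (x - y) * FF a b c γ m x y) := by
      intro y
      field_simp
      ring
    calc ∫ y : ℝ, y * FF a b c γ m x y
        = ∫ y : ℝ, (x * FF a b c γ m x y
            + 1 / (2 * b) * (-2 * b * (x - y) * FF a b c γ m x y)) := by
          exact integral_congr_ae (Filter.Eventually.of_forall hsplit)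
      _ = (∫ y : ℝ, x * FF a b c γ m x y)
            + ∫ y : ℝ, 1 / (2 * b) * (-2 * b * (x - y) * FF a b c γ m x y) :=
          integral_add ((FF_integrable a b c γ ha hb.le hca' hγ0 m x).const_mul x)
            (hLint.const_mul _)
      _ = x * (∫ y : ℝ, FF a b c γ m x y)
            + 1 / (2 * b) * ∫ y : ℝ, -2 * b * (x - y) * FF a b c γ m x y := by
          rw [integral_const_mul, integral_const_mul]
      _ = x * (S * B ^ m * psiF c a γ m x) + 1 / (2 * b) * (S * B ^ m * dψm x) := by
          rw [hIH x, huniq]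
  -- base case n = 0
  have base0 : ∀ x, ∫ y : ℝ, FF a b c γ 0 x y = S * B ^ 0 * psiF c a γ 0 x := by
    intro x
    have hrw : ∀ y : ℝ, FF a b c γ 0 x y
        = Real.exp (-(c - a) * x ^ 2)
          * Real.exp (-(a + b + c) * (y - b * x / (a + b + c)) ^ 2) := by
      intro y
      have : FF a b c γ 0 x y
          = Real.exp (-b * (x - y) ^ 2) * Real.exp (-(c - a) * y ^ 2)
            * Real.exp (-(2 * a) * y ^ 2) := by
        unfold FF psiF
        simp [physHermite]
      rw [this, exp_ident a b c hAne hc2 x y]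
    calc ∫ y : ℝ, FF a b c γ 0 x y
        = ∫ y : ℝ, Real.exp (-(c - a) * x ^ 2)
            * Real.exp (-(a + b + c) * (y - b * x / (a + b + c)) ^ 2) :=
          integral_congr_ae (Filter.Eventually.of_forall hrw)
      _ = Real.exp (-(c - a) * x ^ 2)
            * ∫ y : ℝ, Real.exp (-(a + b + c) * (y - b * x / (a + b + c)) ^ 2) :=
          integral_const_mul _ _
      _ = Real.exp (-(c - a) * x ^ 2) * S := by rw [integral_gauss_shift]
      _ = S * B ^ 0 * psiF c a γ 0 x := by
          unfold psiF
          simp [physHermite]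
          ring
  -- key algebraic identities
  have hid1 : b - (c - a) = b * B := by
    rw [hBdef, ← mul_div_assoc, eq_div_iff hAne]
    linear_combination key
  have hid2 : 2 * c * B = b * (1 - B ^ 2) := by
    rw [hBdef]
    field_simp
    ring_nf
    linear_combination hc2
  have h2b : 2 * b * (1 / (2 * b)) = 1 := by field_simp
  intro n
  induction n using Nat.twoStepInduction with
  | zero => exact base0
  | one =>
    intro x
    have hrec : ∀ y : ℝ, FF a b c γ 1 x y = 2 * γ * (y * FF a b c γ 0 x y) := by
      intro y
      unfold FF psiF
      simp [physHermite]
      ring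
    have hm := moment 0 (fun x => -2 * (c - a) * x * psiF c a γ 0 x) base0
      (psiF_hasDerivAt_zero c a γ) x
    calc ∫ y : ℝ, FF a b c γ 1 x y
        = ∫ y : ℝ, 2 * γ * (y * FF a b c γ 0 x y) :=
          integral_congr_ae (Filter.Eventually.of_forall hrec)
      _ = 2 * γ * ∫ y : ℝ, y * FF a b c γ 0 x y := integral_const_mul _ _
      _ = 2 * γ * (x * (S * B ^ 0 * psiF c a γ 0 x)
            + 1 / (2 * b) * (S * B ^ 0 * (-2 * (c - a) * x * psiF c a γ 0 x))) := by rw [hm]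
      _ = S * B ^ 1 * psiF c a γ 1 x := by
          have hpsi1 : psiF c a γ 1 x = 2 * γ * x * psiF c a γ 0 x := by
            unfold psiF
            simp [physHermite]
            ring
          rw [hpsi1]
          linear_combination (4 * γ * x * S * psiF c a γ 0 x * (1 / (2 * b))) * hid1
            + (-2 * γ * x * S * psiF c a γ 0 x * (1 - B)) * h2b
  | more n ih1 ih2 =>
    intro x
    have hrec : ∀ y : ℝ, FF a b c γ (n + 2) x y
        = 2 * γ * (y * FF a b c γ (n + 1) x y) - 2 * (n + 1) * FF a b c γ n x y := by
      intro y
      unfold FF psiF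
      show Real.exp (-b * (x - y) ^ 2)
          * (Real.exp (-(c - a) * y ^ 2) * (2 * (γ * y) * physHermite (n + 1) (γ * y)
            - 2 * (↑n + 1) * physHermite n (γ * y))) * Real.exp (-(2 * a) * y ^ 2) = _
      ring
    have hm := moment (n + 1)
      (fun x => -2 * (c - a) * x * psiF c a γ (n + 1) x + 2 * (n + 1) * γ * psiF c a γ n x)
      ih2 (psiF_hasDerivAt_succ c a γ n) x
    have hint1 : Integrable (fun y : ℝ => 2 * γ * (y * FF a b c γ (n + 1) x y)) := by
      apply Integrable.const_mul
      apply FF_mul_integrable a b c γ ha hb.le hca' hγ0 (n + 1) x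
        (fun y => y) continuous_id 1 zero_le_one
      intro y
      rw [one_mul]
      linarith [abs_nonneg y]
    have hint2 : Integrable (fun y : ℝ => 2 * (n + 1 : ℝ) * FF a b c γ n x y) :=
      (FF_integrable a b c γ ha hb.le hca' hγ0 n x).const_mul _
    calc ∫ y : ℝ, FF a b c γ (n + 2) x y
        = ∫ y : ℝ, (2 * γ * (y * FF a b c γ (n + 1) x y)
            - 2 * (n + 1 : ℝ) * FF a b c γ n x y) :=
          integral_congr_ae (Filter.Eventually.of_forall hrec)
      _ = (∫ y : ℝ, 2 * γ * (y * FF a b c γ (n + 1) x y))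
            - ∫ y : ℝ, 2 * (n + 1 : ℝ) * FF a b c γ n x y := integral_sub hint1 hint2
      _ = 2 * γ * (∫ y : ℝ, y * FF a b c γ (n + 1) x y)
            - 2 * (n + 1 : ℝ) * ∫ y : ℝ, FF a b c γ n x y := by
          rw [integral_const_mul, integral_const_mul]
      _ = 2 * γ * (x * (S * B ^ (n + 1) * psiF c a γ (n + 1) x)
            + 1 / (2 * b) * (S * B ^ (n + 1)
              * (-2 * (c - a) * x * psiF c a γ (n + 1) x
                + 2 * (n + 1) * γ * psiF c a γ n x)))
            - 2 * (n + 1 : ℝ) * (S * B ^ n * psiF c a γ n x) := by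
          rw [hm, ih1 x]
      _ = S * B ^ (n + 2) * psiF c a γ (n + 2) x := by
          have hpsi2 : psiF c a γ (n + 2) x
              = 2 * γ * x * psiF c a γ (n + 1) x - 2 * (n + 1 : ℝ) * psiF c a γ n x := by
            unfold psiF
            show Real.exp (-(c - a) * x ^ 2) * (2 * (γ * x) * physHermite (n + 1) (γ * x)
              - 2 * (↑n + 1) * physHermite n (γ * x)) = _
            ring
          rw [hpsi2]
          set u := psiF c a γ (n + 1) x
          set v := psiF c a γ n x
          have hBpow : B ^ (n + 1) = B ^ n * B := pow_succ B n
          have hBpow2 : B ^ (n + 2) = B ^ n * B ^ 2 := by rw [pow_add]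
          rw [hBpow, hBpow2]
          linear_combination (4 * γ * x * S * B ^ n * B * u * (1 / (2 * b))) * hid1
            + (-2 * γ * x * S * B ^ n * B * u * (1 - B)
                + 2 * ((n : ℝ) + 1) * S * B ^ n * v * (1 - B ^ 2)) * h2b
            + (4 * ((n : ℝ) + 1) * (1 / (2 * b)) * S * B ^ n * v * B) * hγ
            + (4 * ((n : ℝ) + 1) * (1 / (2 * b)) * S * B ^ n * v) * hid2


/-- With `a = 1/(4σ²)`, `b = 1/(2ℓ²)`, `c = √(a² + 2ab)`, `A = a + b + c`,
`B = b/A`, the functions `φ_n(x) = exp(−(c−a)x²)·H_n(√(2c)x)` (with `H_n` the physicists'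
Hermite polynomials) are eigenfunctions of the Fredholm integral operator with
squared-exponential kernel `exp(−(x−y)²/(2ℓ²))` under the Gaussian measure `N(0,σ²)`,
with eigenvalues `√(2a/A)·Bⁿ`. -/
theorem sqExpKernel_fredholm_eigenfunction
    (σ ℓ : ℝ) (hσ : 0 < σ) (hℓ : 0 < ℓ)
    (a b c A B : ℝ)
    (ha : a = 1 / (4 * σ ^ 2)) (hb : b = 1 / (2 * ℓ ^ 2))
    (hc : c = Real.sqrt (a ^ 2 + 2 * a * b))
    (hA : A = a + b + c) (hB : B = b / A)
    (φ : ℕ → ℝ → ℝ)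
    (hφ : ∀ n x, φ n x = Real.exp (-(c - a) * x ^ 2) * physHermite n (Real.sqrt (2 * c) * x)) :
    ∀ (n : ℕ) (x : ℝ),
      ∫ y : ℝ, Real.exp (-(x - y) ^ 2 / (2 * ℓ ^ 2)) * φ n y *
          ((σ * Real.sqrt (2 * Real.pi))⁻¹ * Real.exp (-y ^ 2 / (2 * σ ^ 2)))
        = Real.sqrt (2 * a / A) * B ^ n * φ n x := by
  have ha0 : 0 < a := by rw [ha]; positivity
  have hb0 : 0 < b := by rw [hb]; positivity
  have hc2 : c ^ 2 = a ^ 2 + 2 * a * b := by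
    rw [hc, Real.sq_sqrt (by positivity)]
  have hc0 : 0 < c := by
    rw [hc]
    apply Real.sqrt_pos.mpr
    positivity
  set γ := Real.sqrt (2 * c) with hγdef
  have hγ : γ ^ 2 = 2 * c := Real.sq_sqrt (by positivity)
  have hγ0 : 0 ≤ γ := Real.sqrt_nonneg _
  intro n x
  -- rewrite the integrand
  have hκ0 : (0:ℝ) < σ * Real.sqrt (2 * π) := by
    apply mul_pos hσ
    apply Real.sqrt_pos.mpr
    positivity
  have hrw : ∀ y : ℝ, Real.exp (-(x - y) ^ 2 / (2 * ℓ ^ 2)) * φ n y *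
      ((σ * Real.sqrt (2 * Real.pi))⁻¹ * Real.exp (-y ^ 2 / (2 * σ ^ 2)))
      = (σ * Real.sqrt (2 * Real.pi))⁻¹ * FF a b c γ n x y := by
    intro y
    have e1 : -(x - y) ^ 2 / (2 * ℓ ^ 2) = -b * (x - y) ^ 2 := by
      rw [hb]; ring
    have e2 : -y ^ 2 / (2 * σ ^ 2) = -(2 * a) * y ^ 2 := by
      rw [ha]
      field_simp
      ring
    rw [e1, e2, hφ]
    unfold FF psiF
    ring
  rw [integral_congr_ae (Filter.Eventually.of_forall hrw), integral_const_mul,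
    main_integral a b c γ ha0 hb0 hc2 hc0 hγ hγ0 n x]
  -- constants
  have hconst : (σ * Real.sqrt (2 * Real.pi))⁻¹ * Real.sqrt (π / (a + b + c))
      = Real.sqrt (2 * a / (a + b + c)) := by
    have hκ : (σ * Real.sqrt (2 * Real.pi))⁻¹ = Real.sqrt (2 * a / π) := by
      have h1 : 2 * a / π = (2 * π * σ ^ 2)⁻¹ := by
        rw [ha]
        field_simp
        ring
      rw [h1, Real.sqrt_inv, Real.sqrt_mul (by positivity : (0:ℝ) ≤ 2 * π),
        Real.sqrt_sq hσ.le]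
      rw [mul_comm (Real.sqrt (2 * π)) σ]
    rw [hκ, ← Real.sqrt_mul (by positivity : (0:ℝ) ≤ 2 * a / π)]
    congr 1
    have hA0 : (0:ℝ) < a + b + c := by linarith
    field_simp
  rw [hB, hA]
  calc (σ * Real.sqrt (2 * Real.pi))⁻¹
        * (Real.sqrt (π / (a + b + c)) * (b / (a + b + c)) ^ n * psiF c a γ n x)
      = ((σ * Real.sqrt (2 * Real.pi))⁻¹ * Real.sqrt (π / (a + b + c)))
        * (b / (a + b + c)) ^ n * psiF c a γ n x := by ring
    _ = Real.sqrt (2 * a / (a + b + c)) * (b / (a + b + c)) ^ n * φ n x := by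
        rw [hconst, hφ]
        rfl
end

section
/- Let σ > 0 and ℓ > 0, set a = 1/(4σ²), b = 1/(2ℓ²), c = √(a² + 2ab), and let H_n denote the physicists' Hermite polynomials (H₀ = 1, H₁(x) = 2x, H_{n+1}(x) = 2x H_n(x) − 2n H_{n−1}(x)). Define f_{k}(x) = √(2σ√c/(2^{k−1}(k−1)!)) · exp(−(c − a)x²) · H_{k−1}(√(2c)·x) for integers k ≥ 1. Then for all integers k, l ≥ 1, ∫_ℝ f_k(x) · f_l(x) · (σ√(2π))⁻¹ exp(−x²/(2σ²)) dx = δ_{kl}; that is, the functions f_k are orthonormal in L² of the Gaussian measure N(0, σ²). -/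
open MeasureTheory Real Polynomial

noncomputable def pH : ℕ → Polynomial ℝ
  | 0 => 1
  | 1 => C 2 * X
  | n + 2 => C 2 * X * pH (n + 1) - C (2 * ((n : ℝ) + 1)) * pH n

lemma physHermite_eq_aux : ∀ n : ℕ, (∀ x : ℝ, physHermite n x = (pH n).eval x) ∧
    (∀ x : ℝ, physHermite (n + 1) x = (pH (n + 1)).eval x) := by
  intro n
  induction n with
  | zero => constructor <;> intro x <;> simp [physHermite, pH]
  | succ n ih =>
    refine ⟨ih.2, fun x => ?_⟩
    show physHermite (n + 2) x = (pH (n + 2)).eval x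
    rw [show physHermite (n + 2) x
        = 2 * x * physHermite (n + 1) x - 2 * (n + 1) * physHermite n x from rfl,
      show pH (n + 2) = C 2 * X * pH (n + 1) - C (2 * ((n : ℝ) + 1)) * pH n from rfl]
    simp only [eval_sub, eval_mul, eval_C, eval_X, ih.1 x, ih.2 x]

lemma physHermite_eq (n : ℕ) (x : ℝ) : physHermite n x = (pH n).eval x :=
  (physHermite_eq_aux n).1 x

lemma pH_succ_succ (n : ℕ) :
    pH (n + 2) = C 2 * X * pH (n + 1) - C (2 * ((n : ℝ) + 1)) * pH n := rfl

def Pd (n : ℕ) : Prop := derivative (pH (n + 1)) = C (2 * ((n : ℝ) + 1)) * pH n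

lemma pH_deriv_aux : ∀ n : ℕ, Pd n ∧ Pd (n + 1) := by
  intro n
  induction n with
  | zero =>
    simp only [Pd]
    constructor
    · apply Polynomial.funext
      intro x
      simp [pH]
    · rw [show (0:ℕ) + 1 + 1 = 0 + 2 from rfl, pH_succ_succ 0, derivative_sub,
        derivative_mul, derivative_mul]
      apply Polynomial.funext
      intro x
      simp [pH]
      ring
  | succ n ih =>
    simp only [Pd] at ih ⊢
    refine ⟨ih.2, ?_⟩
    rw [show n + 1 + 1 + 1 = n + 1 + 2 from rfl, pH_succ_succ (n + 1), derivative_sub,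
      derivative_mul, derivative_mul, derivative_mul, ih.2, ih.1]
    apply Polynomial.funext
    intro x
    have hx : eval x (pH (n + 1 + 1)) = 2 * x * eval x (pH (n + 1))
        - 2 * ((n : ℝ) + 1) * eval x (pH n) := by
      rw [show n + 1 + 1 = n + 2 from rfl, pH_succ_succ n]
      simp
    simp only [derivative_C, derivative_X, eval_add, eval_sub, eval_mul, eval_C, eval_X,
      eval_zero, eval_one, zero_mul, mul_one, zero_add, hx]
    push_cast
    ring

lemma pH_deriv (n : ℕ) : derivative (pH (n + 1)) = C (2 * ((n : ℝ) + 1)) * pH n :=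
  (pH_deriv_aux n).1

lemma pH_weight : ∀ n : ℕ, derivative (pH n) - C 2 * X * pH n = - pH (n + 1) := by
  intro n
  match n with
  | 0 =>
    show derivative 1 - C 2 * X * 1 = -(C 2 * X)
    simp
  | (n + 1) =>
    rw [pH_deriv,
      show pH (n + 2) = C 2 * X * pH (n + 1) - C (2 * ((n : ℝ) + 1)) * pH n from rfl]
    ring

lemma integrable_pow_gauss (i : ℕ) :
    Integrable (fun x : ℝ => x ^ i * Real.exp (-x ^ 2)) := by
  have h2i : Integrable (fun x : ℝ => x ^ (2 * i) * Real.exp (-x ^ 2)) := by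
    have h := integrable_rpow_mul_exp_neg_mul_sq (b := 1) one_pos
      (s := ((2 * i : ℕ) : ℝ)) (neg_one_lt_zero.trans_le (Nat.cast_nonneg _))
    have he : ∀ x : ℝ, x ^ ((2 * i : ℕ) : ℝ) * Real.exp (-1 * x ^ 2)
        = x ^ (2 * i) * Real.exp (-x ^ 2) := by
      intro x
      rw [Real.rpow_natCast]
      norm_num
    exact h.congr (Filter.Eventually.of_forall he)
  have h1 : Integrable (fun x : ℝ => Real.exp (-x ^ 2)) := by
    have h := integrable_exp_neg_mul_sq (b := (1:ℝ)) one_pos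
    refine h.congr (Filter.Eventually.of_forall fun x => ?_)
    norm_num
  refine (h1.add h2i).mono' ?_ ?_
  · exact ((continuous_pow i).mul (by fun_prop)).aestronglyMeasurable
  · filter_upwards with x
    have hx2 : (0:ℝ) ≤ x ^ (2 * i) := by
      rw [pow_mul]; positivity
    have hx : |x| ^ i ≤ 1 + x ^ (2 * i) := by
      rcases le_total (|x|) 1 with h | h
      · have := pow_le_one₀ (abs_nonneg x) h (n := i)
        linarith
      · have h1 : |x| ^ i ≤ |x| ^ (2 * i) :=
          pow_le_pow_right₀ h (by omega)
        have h2 : |x| ^ (2 * i) = x ^ (2 * i) := by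
          rw [← abs_pow, abs_of_nonneg hx2]
        rw [h2] at h1
        linarith
    have hexp : (0:ℝ) < Real.exp (-x ^ 2) := Real.exp_pos _
    calc ‖x ^ i * Real.exp (-x ^ 2)‖ = |x| ^ i * Real.exp (-x ^ 2) := by
          rw [norm_mul, norm_pow]
          simp [abs_of_pos hexp, Real.norm_eq_abs]
      _ ≤ (1 + x ^ (2 * i)) * Real.exp (-x ^ 2) :=
          mul_le_mul_of_nonneg_right hx hexp.le
      _ = Real.exp (-x ^ 2) + x ^ (2 * i) * Real.exp (-x ^ 2) := by ring

lemma integrable_poly_gauss (P : Polynomial ℝ) :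
    Integrable (fun x : ℝ => P.eval x * Real.exp (-x ^ 2)) := by
  have : (fun x : ℝ => P.eval x * Real.exp (-x ^ 2)) =
      fun x => ∑ i ∈ Finset.range (P.natDegree + 1),
        P.coeff i * (x ^ i * Real.exp (-x ^ 2)) := by
    funext x
    rw [Polynomial.eval_eq_sum_range, Finset.sum_mul]
    exact Finset.sum_congr rfl fun i _ => by ring
  rw [this]
  exact integrable_finset_sum _ fun i _ => (integrable_pow_gauss i).const_mul _

lemma hasDerivAt_gauss (x : ℝ) :
    HasDerivAt (fun y : ℝ => Real.exp (-y ^ 2)) (-(2 * x) * Real.exp (-x ^ 2)) x := by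
  have h : HasDerivAt (fun y : ℝ => -y ^ 2) (-(2 * x)) x := by
    have h0 := (hasDerivAt_pow 2 x).neg
    simp only [Pi.neg_def] at h0
    simpa using h0
  simpa [mul_comm] using h.exp

lemma hasDerivAt_g (n : ℕ) (x : ℝ) :
    HasDerivAt (fun y => (pH n).eval y * Real.exp (-y ^ 2))
      (-((pH (n + 1)).eval x * Real.exp (-x ^ 2))) x := by
  have h1 : HasDerivAt (fun y : ℝ => (pH n).eval y) ((derivative (pH n)).eval x) x :=
    (pH n).hasDerivAt x
  have h := h1.mul (hasDerivAt_gauss x)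
  have key := congrArg (Polynomial.eval x) (pH_weight n)
  simp only [eval_sub, eval_mul, eval_C, eval_X, eval_neg] at key
  exact h.congr_deriv (by linear_combination (Real.exp (-x ^ 2)) * key)

lemma I_step (m n : ℕ) :
    ∫ x : ℝ, (pH m).eval x * (pH (n + 1)).eval x * Real.exp (-x ^ 2)
      = ∫ x : ℝ, (derivative (pH m)).eval x * (pH n).eval x * Real.exp (-x ^ 2) := by
  have hu : ∀ x : ℝ, HasDerivAt (fun y => (pH m).eval y) ((derivative (pH m)).eval x) x :=
    fun x => (pH m).hasDerivAt x
  have hv : ∀ x : ℝ, HasDerivAt (fun y => (pH n).eval y * Real.exp (-y ^ 2))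
      (-((pH (n + 1)).eval x * Real.exp (-x ^ 2))) x := hasDerivAt_g n
  have huv' : Integrable ((fun x => (pH m).eval x) *
      fun x => -((pH (n + 1)).eval x * Real.exp (-x ^ 2))) := by
    refine (integrable_poly_gauss (pH m * pH (n + 1))).neg.congr
      (Filter.Eventually.of_forall fun x => ?_)
    show -((pH m * pH (n + 1)).eval x * Real.exp (-x ^ 2))
      = (pH m).eval x * -((pH (n + 1)).eval x * Real.exp (-x ^ 2))
    rw [eval_mul]; ring
  have hu'v : Integrable ((fun x => (derivative (pH m)).eval x) *
      fun x => (pH n).eval x * Real.exp (-x ^ 2)) := by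
    refine (integrable_poly_gauss (derivative (pH m) * pH n)).congr
      (Filter.Eventually.of_forall fun x => ?_)
    show (derivative (pH m) * pH n).eval x * Real.exp (-x ^ 2)
      = (derivative (pH m)).eval x * ((pH n).eval x * Real.exp (-x ^ 2))
    rw [eval_mul]; ring
  have huv : Integrable ((fun x => (pH m).eval x) *
      fun x => (pH n).eval x * Real.exp (-x ^ 2)) := by
    refine (integrable_poly_gauss (pH m * pH n)).congr
      (Filter.Eventually.of_forall fun x => ?_)
    show (pH m * pH n).eval x * Real.exp (-x ^ 2)
      = (pH m).eval x * ((pH n).eval x * Real.exp (-x ^ 2))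
    rw [eval_mul]; ring
  have key := MeasureTheory.integral_mul_deriv_eq_deriv_mul_of_integrable
    (fun x _ => hu x) (fun x _ => hv x) huv' hu'v huv
  have hl : ∫ x : ℝ, (pH m).eval x * -((pH (n + 1)).eval x * Real.exp (-x ^ 2))
      = - ∫ x : ℝ, (pH m).eval x * (pH (n + 1)).eval x * Real.exp (-x ^ 2) := by
    rw [← integral_neg]
    congr 1; funext x; ring
  have hr : ∫ x : ℝ, (derivative (pH m)).eval x * ((pH n).eval x * Real.exp (-x ^ 2))
      = ∫ x : ℝ, (derivative (pH m)).eval x * (pH n).eval x * Real.exp (-x ^ 2) := by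
    congr 1; funext x; ring
  rw [hl, hr] at key
  linarith [key]

lemma I_zero (n : ℕ) :
    ∫ x : ℝ, (pH 0).eval x * (pH n).eval x * Real.exp (-x ^ 2)
      = if (0 : ℕ) = n then Real.sqrt π else 0 := by
  match n with
  | 0 =>
    simp only [if_pos rfl]
    have heq : ∀ x : ℝ, (pH 0).eval x * (pH 0).eval x * Real.exp (-x ^ 2)
        = Real.exp (-1 * x ^ 2) := by
      intro x
      show (1:Polynomial ℝ).eval x * (1:Polynomial ℝ).eval x * _ = _
      simp
    rw [integral_congr_ae (Filter.Eventually.of_forall heq), integral_gaussian]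
    simp
  | (n + 1) =>
    rw [I_step 0 n]
    have : ∀ x : ℝ, (derivative (pH 0)).eval x * (pH n).eval x * Real.exp (-x ^ 2) = 0 := by
      intro x
      show (derivative (1 : Polynomial ℝ)).eval x * _ * _ = 0
      simp
    rw [integral_congr_ae (Filter.Eventually.of_forall this)]
    simp

lemma I_eval : ∀ m n : ℕ, ∫ x : ℝ, (pH m).eval x * (pH n).eval x * Real.exp (-x ^ 2)
    = if m = n then Real.sqrt π * 2 ^ m * (m.factorial : ℝ) else 0 := by
  intro m
  induction m with
  | zero =>
    intro n
    simpa using I_zero n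
  | succ m ih =>
    intro n
    match n with
    | 0 =>
      have hsym : ∫ x : ℝ, (pH (m + 1)).eval x * (pH 0).eval x * Real.exp (-x ^ 2)
          = ∫ x : ℝ, (pH 0).eval x * (pH (m + 1)).eval x * Real.exp (-x ^ 2) := by
        congr 1; funext x; ring
      rw [hsym, I_zero]
      simp
    | (n + 1) =>
      rw [I_step (m + 1) n]
      have heq : ∀ x : ℝ, (derivative (pH (m + 1))).eval x * (pH n).eval x * Real.exp (-x ^ 2)
          = (2 * ((m : ℝ) + 1)) * ((pH m).eval x * (pH n).eval x * Real.exp (-x ^ 2)) := by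
        intro x
        rw [pH_deriv]
        simp only [eval_mul, eval_C]
        ring
      rw [integral_congr_ae (Filter.Eventually.of_forall heq), integral_const_mul, ih n]
      by_cases h : m = n
      · subst h
        rw [if_pos rfl, if_pos rfl]
        rw [Nat.factorial_succ]
        push_cast
        ring
      · rw [if_neg h, if_neg (by omega)]
        ring

lemma final_arith (σ c pm fm : ℝ) (hσ : 0 < σ) (hc : 0 < c) (hpm : 0 < pm) (hfm : 0 < fm) :
    2 * σ * Real.sqrt c / (pm * fm) * (σ * Real.sqrt (2 * π))⁻¹ *
      ((Real.sqrt (2 * c))⁻¹ * (Real.sqrt π * pm * fm)) = 1 := by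
  rw [Real.sqrt_mul (by norm_num : (0:ℝ) ≤ 2) π, Real.sqrt_mul (by norm_num : (0:ℝ) ≤ 2) c]
  have hsc : 0 < Real.sqrt c := Real.sqrt_pos.mpr hc
  have hspi : 0 < Real.sqrt π := Real.sqrt_pos.mpr Real.pi_pos
  have hs2 : (0:ℝ) < Real.sqrt 2 := Real.sqrt_pos.mpr (by norm_num)
  have h22 : Real.sqrt 2 * Real.sqrt 2 = 2 := Real.mul_self_sqrt (by norm_num)
  field_simp
  linear_combination (-1) * h22

/-- With `a = 1/(4σ²)`, `b = 1/(2ℓ²)`, `c = √(a² + 2ab)`, the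
Karhunen–Loève eigenfunctions
`f_k(x) = √(2σ√c/(2^{k−1}(k−1)!))·exp(−(c−a)x²)·H_{k−1}(√(2c)x)` (for `k ≥ 1`) of the
squared-exponential kernel are orthonormal in `L²` of the Gaussian measure `N(0,σ²)`. -/
theorem sqExpKernel_eigenfunctions_orthonormal
    (σ ℓ : ℝ) (hσ : 0 < σ) (hℓ : 0 < ℓ)
    (a b c : ℝ)
    (ha : a = 1 / (4 * σ ^ 2)) (hb : b = 1 / (2 * ℓ ^ 2))
    (hc : c = Real.sqrt (a ^ 2 + 2 * a * b))
    (f : ℕ → ℝ → ℝ)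
    (hf : ∀ (k : ℕ) (x : ℝ),
      f k x = Real.sqrt (2 * σ * Real.sqrt c / (2 ^ (k - 1) * (Nat.factorial (k - 1)))) *
        Real.exp (-(c - a) * x ^ 2) * physHermite (k - 1) (Real.sqrt (2 * c) * x)) :
    ∀ k l : ℕ, 1 ≤ k → 1 ≤ l →
      ∫ x : ℝ, f k x * f l x *
          ((σ * Real.sqrt (2 * Real.pi))⁻¹ * Real.exp (-x ^ 2 / (2 * σ ^ 2)))
        = if k = l then 1 else 0 := by
  intro k l hk hl
  set m := k - 1 with hm
  set n := l - 1 with hn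
  have hapos : 0 < a := by rw [ha]; positivity
  have hbpos : 0 < b := by rw [hb]; positivity
  have hcpos : 0 < c := by
    rw [hc]; exact Real.sqrt_pos.mpr (by nlinarith)
  set s : ℝ := Real.sqrt (2 * c) with hs
  have hspos : 0 < s := Real.sqrt_pos.mpr (by linarith)
  have hs2 : s ^ 2 = 2 * c := Real.sq_sqrt (by linarith)
  set Am : ℝ := 2 * σ * Real.sqrt c / (2 ^ m * (Nat.factorial m : ℝ)) with hAm
  set An : ℝ := 2 * σ * Real.sqrt c / (2 ^ n * (Nat.factorial n : ℝ)) with hAn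
  set K : ℝ := Real.sqrt Am * Real.sqrt An * (σ * Real.sqrt (2 * Real.pi))⁻¹ with hK
  set g : ℝ → ℝ := fun y => (pH m).eval y * (pH n).eval y * Real.exp (-y ^ 2) with hg
  have hpoint : ∀ x : ℝ, f k x * f l x *
      ((σ * Real.sqrt (2 * Real.pi))⁻¹ * Real.exp (-x ^ 2 / (2 * σ ^ 2)))
      = K * g (s * x) := by
    intro x
    rw [hf k x, hf l x, physHermite_eq, physHermite_eq]
    have hE : Real.exp (-(c - a) * x ^ 2) * Real.exp (-(c - a) * x ^ 2) *
        Real.exp (-x ^ 2 / (2 * σ ^ 2)) = Real.exp (-(s * x) ^ 2) := by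
      rw [← Real.exp_add, ← Real.exp_add]
      congr 1
      have h2a : -x ^ 2 / (2 * σ ^ 2) = -(2 * a * x ^ 2) := by
        rw [ha]; field_simp; ring
      rw [h2a, mul_pow, hs2]
      ring
    calc Real.sqrt Am * Real.exp (-(c - a) * x ^ 2) * (pH m).eval (s * x) *
          (Real.sqrt An * Real.exp (-(c - a) * x ^ 2) * (pH n).eval (s * x)) *
          ((σ * Real.sqrt (2 * Real.pi))⁻¹ * Real.exp (-x ^ 2 / (2 * σ ^ 2)))
        = (Real.sqrt Am * Real.sqrt An * (σ * Real.sqrt (2 * Real.pi))⁻¹) *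
          ((pH m).eval (s * x) * (pH n).eval (s * x) *
            (Real.exp (-(c - a) * x ^ 2) * Real.exp (-(c - a) * x ^ 2) *
              Real.exp (-x ^ 2 / (2 * σ ^ 2)))) := by ring
      _ = K * g (s * x) := by rw [hE]
  rw [integral_congr_ae (Filter.Eventually.of_forall hpoint), integral_const_mul]
  have hcomp : ∫ x : ℝ, g (s * x) = |s⁻¹| • ∫ y : ℝ, g y :=
    MeasureTheory.Measure.integral_comp_mul_left g s
  rw [hcomp, I_eval m n, smul_eq_mul, abs_of_pos (inv_pos.mpr hspos)]
  have hkl : (k = l) ↔ (m = n) := by omega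
  by_cases h : k = l
  · have hmn : m = n := hkl.mp h
    rw [if_pos hmn, if_pos h, hK, hAn, ← hmn, ← hAm]
    have hAmnonneg : 0 ≤ Am := by
      rw [hAm]
      have h0 : (0:ℝ) ≤ Real.sqrt c := Real.sqrt_nonneg c
      positivity
    rw [Real.mul_self_sqrt hAmnonneg, hAm, hs]
    exact final_arith σ c (2 ^ m) (Nat.factorial m : ℝ) hσ hcpos (by positivity) (by positivity)
  · rw [if_neg (fun hmn => h (hkl.mpr hmn)), if_neg h]
    ring
end
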